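/- arXiv:0710.3879 — 2 statements merged into one kernel-verified Lean document; each statement's English description precedes it below -/
import Mathlib

section
/- Let Λ, m be real numbers, K(r) = 2m(1 + cos r)·sin r + (Λ/3)(2cos r + cos 2r), and on ℝ⁴ with coordinates (x, y, u, r) let G(x,y,u,r) = 2·diag(1,1,0,0) + (λ e₄ᵀ + e₄ λᵀ) − 4K(r)·λ λᵀ, where λ = (−y, x, 1, 0) and e₄ = (0,0,0,1). Then for every (x,y,u,r) ∈ ℝ⁴: (i) det G(x,y,u,r) = −4 (so G is everywhere nondegenerate); and (ii) there exists an invertible real 4×4 matrix P with Pᵀ G(x,y,u,r) P = diag(1, 1, 1, −1), i.e. G has Lorentzian signature (3,1) at every point. -/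
/-!
In the coframe (dx, dy, λ, dr) the metric is constant in x, y, u:
ĝ = 2(dx² + dy²) + λ⊗dr + dr⊗λ − 4K λ⊗λ. The change of coframe has determinant 1, so
det ĝ equals the determinant −4 of this block matrix, and the (λ, dr) block −4K λ² + 2λ dr is
a hyperbolic plane for every value of K, which is split into ±1 by an explicit basis.
-/

open Matrix Real

/-- Rows are the components of dx, dy, λ = du + x dy − y dx and dr. -/
def heisenbergCoframe (x y : ℝ) : Matrix (Fin 4) (Fin 4) ℝ :=
  !![1, 0, 0, 0; 0, 1, 0, 0; -y, x, 1, 0; 0, 0, 0, 1]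

def heisenbergFrame (x y : ℝ) : Matrix (Fin 4) (Fin 4) ℝ :=
  !![1, 0, 0, 0; 0, 1, 0, 0; y, -x, 1, 0; 0, 0, 0, 1]

def coframeMetric (k : ℝ) : Matrix (Fin 4) (Fin 4) ℝ :=
  !![2, 0, 0, 0; 0, 2, 0, 0; 0, 0, -k, 1; 0, 0, 1, 0]

/-- Columns 3 and 4 are the vectors of norm 1 and −1 spanning the hyperbolic plane
−k a² + 2ab. -/
noncomputable def coframeMetricDiagonalizer (k : ℝ) : Matrix (Fin 4) (Fin 4) ℝ :=
  !![(√2)⁻¹, 0, 0, 0; 0, (√2)⁻¹, 0, 0; 0, 0, 1, 1; 0, 0, (1 + k) / 2, (k - 1) / 2]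

theorem det_heisenbergCoframe (x y : ℝ) : (heisenbergCoframe x y).det = 1 := by
  simp [heisenbergCoframe, det_succ_row_zero, Fin.sum_univ_succ]

theorem det_heisenbergFrame (x y : ℝ) : (heisenbergFrame x y).det = 1 := by
  simp [heisenbergFrame, det_succ_row_zero, Fin.sum_univ_succ]

theorem heisenbergCoframe_mul_heisenbergFrame (x y : ℝ) :
    heisenbergCoframe x y * heisenbergFrame x y = 1 := by
  ext i j
  fin_cases i <;> fin_cases j <;>
    simp [heisenbergCoframe, heisenbergFrame, mul_apply, Fin.sum_univ_four, one_apply]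

theorem det_coframeMetric (k : ℝ) : (coframeMetric k).det = -4 := by
  simp [coframeMetric, det_succ_row_zero, Fin.sum_univ_succ]
  norm_num

theorem inv_sqrt_two_mul_inv_sqrt_two : (√2)⁻¹ * (√2)⁻¹ = (2 : ℝ)⁻¹ := by
  rw [← mul_inv, mul_self_sqrt zero_le_two]

theorem det_coframeMetricDiagonalizer (k : ℝ) :
    (coframeMetricDiagonalizer k).det = -2⁻¹ := by
  simp [coframeMetricDiagonalizer, det_succ_row_zero, Fin.sum_univ_succ]
  linear_combination (-1 : ℝ) * inv_sqrt_two_mul_inv_sqrt_two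

theorem transpose_coframeMetricDiagonalizer_mul_coframeMetric_mul (k : ℝ) :
    (coframeMetricDiagonalizer k)ᵀ * coframeMetric k * coframeMetricDiagonalizer k =
      diagonal ![1, 1, 1, -1] := by
  ext i j
  fin_cases i <;> fin_cases j <;>
    simp [coframeMetricDiagonalizer, coframeMetric, mul_apply, Fin.sum_univ_four]
  all_goals first
    | ring1
    | linear_combination (2 : ℝ) * inv_sqrt_two_mul_inv_sqrt_two

theorem heisenberg_metric_eq_transpose_mul_coframeMetric_mul (x y k : ℝ) :
    (2 : ℝ) • diagonal ![1, 1, 0, 0] +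
      (vecMulVec ![-y, x, 1, 0] ![0, 0, 0, 1] + vecMulVec ![0, 0, 0, 1] ![-y, x, 1, 0]) -
      k • vecMulVec ![-y, x, 1, 0] ![-y, x, 1, 0] =
      (heisenbergCoframe x y)ᵀ * coframeMetric k * heisenbergCoframe x y := by
  ext i j
  fin_cases i <;> fin_cases j <;>
    simp [heisenbergCoframe, coframeMetric, mul_apply, Fin.sum_univ_four] <;> ring

theorem taub_nut_conformal_metric_lorentzian_general
    (K : ℝ → ℝ)
    (lam : ℝ → ℝ → Fin 4 → ℝ) (hlam : ∀ x y : ℝ, lam x y = ![-y, x, 1, 0])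
    (e₄ : Fin 4 → ℝ) (he₄ : e₄ = ![0, 0, 0, 1])
    (G : ℝ → ℝ → ℝ → ℝ → Matrix (Fin 4) (Fin 4) ℝ)
    (hG : ∀ x y u r : ℝ, G x y u r =
      (2 : ℝ) • Matrix.diagonal ![1, 1, 0, 0] +
      (Matrix.vecMulVec (lam x y) e₄ + Matrix.vecMulVec e₄ (lam x y)) -
      (4 * K r) • Matrix.vecMulVec (lam x y) (lam x y)) :
    ∀ x y u r : ℝ,
      (G x y u r).det = -4 ∧
      ∃ P : Matrix (Fin 4) (Fin 4) ℝ, IsUnit P.det ∧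
        Pᵀ * G x y u r * P = Matrix.diagonal ![1, 1, 1, -1] := by
  intro x y u r
  set B := heisenbergCoframe x y
  set D := coframeMetricDiagonalizer (4 * K r)
  have hGB : G x y u r = Bᵀ * coframeMetric (4 * K r) * B := by
    rw [hG, hlam, he₄, heisenberg_metric_eq_transpose_mul_coframeMetric_mul]
  refine ⟨?_, heisenbergFrame x y * D, ?_, ?_⟩
  · rw [hGB, det_mul, det_mul, det_transpose, det_heisenbergCoframe, det_coframeMetric]
    norm_num
  · rw [det_mul, det_heisenbergFrame, det_coframeMetricDiagonalizer]
    norm_num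
  · calc (heisenbergFrame x y * D)ᵀ * G x y u r * (heisenbergFrame x y * D)
        = Dᵀ * ((B * heisenbergFrame x y)ᵀ * coframeMetric (4 * K r) *
            (B * heisenbergFrame x y)) * D := by
          simp only [hGB, transpose_mul, Matrix.mul_assoc]
      _ = diagonal ![1, 1, 1, -1] := by
          rw [heisenbergCoframe_mul_heisenbergFrame, transpose_one, Matrix.one_mul,
            Matrix.mul_one, transpose_coframeMetricDiagonalizer_mul_coframeMetric_mul]

/-- The coordinate matrix G of the conformal metric ĝ of the Taub–NUT example has
determinant −4 at every point and Lorentzian signature (3,1). -/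
theorem taub_nut_conformal_metric_lorentzian
    (Λ m : ℝ) (K : ℝ → ℝ)
    (hK : ∀ r : ℝ, K r = 2 * m * (1 + Real.cos r) * Real.sin r +
      (Λ / 3) * (2 * Real.cos r + Real.cos (2 * r)))
    (lam : ℝ → ℝ → Fin 4 → ℝ) (hlam : ∀ x y : ℝ, lam x y = ![-y, x, 1, 0])
    (e₄ : Fin 4 → ℝ) (he₄ : e₄ = ![0, 0, 0, 1])
    (G : ℝ → ℝ → ℝ → ℝ → Matrix (Fin 4) (Fin 4) ℝ)
    (hG : ∀ x y u r : ℝ, G x y u r =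
      (2 : ℝ) • Matrix.diagonal ![1, 1, 0, 0] +
      (Matrix.vecMulVec (lam x y) e₄ + Matrix.vecMulVec e₄ (lam x y)) -
      (4 * K r) • Matrix.vecMulVec (lam x y) (lam x y)) :
    ∀ x y u r : ℝ,
      (G x y u r).det = -4 ∧
      ∃ P : Matrix (Fin 4) (Fin 4) ℝ, IsUnit P.det ∧
        Pᵀ * G x y u r * P = Matrix.diagonal ![1, 1, 1, -1] :=
  taub_nut_conformal_metric_lorentzian_general K lam hlam e₄ he₄ G hG
end

section
/- Let f : ℝ → ℝ be twice continuously differentiable with f'(y) ≠ 0 for all y. On ℝ³ with coordinates (x, y, u), define at each point P = (x, y, u) the ℂ-valued linear forms λ_P(v) = −(2/f'(y))·(v_u + f(y)·v_x) and μ(v) = v_x + i·v_y on v = (v_x, v_y, v_u) ∈ ℝ³, and set c(y) = i·f''(y)/(2 f'(y)). Then for every point P and all vectors v, w ∈ ℝ³: (D_v λ)_P(w) − (D_w λ)_P(v) = i·(μ(v)·conj(μ(w)) − μ(w)·conj(μ(v))) + (c(y)·μ(v) + conj(c(y))·conj(μ(v)))·λ_P(w) − (c(y)·μ(w) + conj(c(y))·conj(μ(w)))·λ_P(v),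 where (D_v λ)_P(w) is the directional derivative at P in direction v of P ↦ λ_P(w). That is, dλ = i μ∧μ̄ + (cμ + c̄μ̄)∧λ with the convention (α∧β)(v,w) = α(v)β(w) − α(w)β(v). -/
open Complex ComplexConjugate

/-! The coefficients of `λ` depend on `y` only, and `∂_y λ = -(f''/f') λ - 2 dx`, so
`dλ = dy ∧ (-(f''/f') λ - 2 dx)`. On the other side `i μ∧μ̄ = 2 dx∧dy`, and since `c` is
purely imaginary, `cμ + c̄μ̄ = 2 Re (cμ) = -(f''/f') dy`. -/

theorem fderiv_comp_fst_snd_apply {F : Type*} [NormedAddCommGroup F] [NormedSpace ℝ F]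
    {α β : Type*} [NormedAddCommGroup α] [NormedSpace ℝ α] [NormedAddCommGroup β] [NormedSpace ℝ β]
    {g : ℝ → F} {P : α × ℝ × β} (hg : DifferentiableAt ℝ g P.2.1) (z : α × ℝ × β) :
    fderiv ℝ (fun Q : α × ℝ × β => g Q.2.1) P z = z.2.1 • deriv g P.2.1 := by
  rw [HasFDerivAt.fderiv (f := fun Q : α × ℝ × β => g Q.2.1)
    (hg.hasDerivAt.hasFDerivAt.comp P hasFDerivAt_snd.fst)]
  simp

theorem hasDerivAt_neg_two_div_deriv_mul {f : ℝ → ℝ} {y : ℝ} (hf : DifferentiableAt ℝ f y)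
    (hf' : DifferentiableAt ℝ (deriv f) y) (h0 : deriv f y ≠ 0) (a b : ℂ) :
    HasDerivAt (fun t => -(2 / ((deriv f t : ℝ) : ℂ)) * (a + f t * b))
      (-((deriv (deriv f) y / deriv f y : ℝ) : ℂ) * (-(2 / ((deriv f y : ℝ) : ℂ)) * (a + f y * b))
        - 2 * b) y := by
  have h0' : ((deriv f y : ℝ) : ℂ) ≠ 0 := by exact_mod_cast h0
  have hcoef := ((hasDerivAt_const y (2 : ℂ)).fun_div hf'.hasDerivAt.ofReal_comp h0').fun_neg
  have hlin := (hf.hasDerivAt.ofReal_comp.mul_const b).const_add a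
  refine (hcoef.mul hlin).congr_deriv ?_
  push_cast
  field_simp
  ring

theorem I_mul_sub_mul_conj (a b a' b' : ℝ) :
    I * ((a + I * b) * conj (a' + I * b') - (a' + I * b') * conj (a + I * b)) =
      2 * (a * b' - b * a') := by
  simp only [map_add, map_mul, conj_ofReal, conj_I]
  ring_nf
  rw [I_sq]
  ring

theorem I_mul_div_two_mul_add_conj (r a b : ℝ) :
    I * r / 2 * (a + I * b) + conj (I * r / 2) * conj (a + I * b) = -(r * b) := by
  simp only [map_add, map_mul, map_div₀, map_ofNat, conj_ofReal, conj_I]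
  ring_nf
  rw [I_sq]
  ring

/-- For the second example's CR structure on ℝ³, with λ_P(v) = −(2/f'(y))(v_u + f(y) v_x)
and μ(v) = v_x + i v_y, the structure equation dλ = i μ∧μ̄ + (cμ + c̄μ̄)∧λ holds with
c(y) = i f''(y)/(2 f'(y)). -/
theorem second_example_structure_equation
    (f : ℝ → ℝ) (hf : ContDiff ℝ 2 f) (hf' : ∀ y : ℝ, deriv f y ≠ 0)
    (lam : ℝ × ℝ × ℝ → ℝ × ℝ × ℝ → ℂ)
    (hlam : ∀ P v : ℝ × ℝ × ℝ,
      lam P v = -((2 : ℂ) / Complex.ofReal (deriv f P.2.1)) * ((v.2.2 : ℂ) + (f P.2.1 : ℂ) * (v.1 : ℂ)))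
    (mu : ℝ × ℝ × ℝ → ℂ)
    (hmu : ∀ v : ℝ × ℝ × ℝ, mu v = (v.1 : ℂ) + Complex.I * (v.2.1 : ℂ))
    (c : ℝ → ℂ)
    (hc : ∀ y : ℝ, c y = Complex.I * (Complex.ofReal (deriv (deriv f) y)) / (2 * Complex.ofReal (deriv f y))) :
    ∀ P v w : ℝ × ℝ × ℝ,
      fderiv ℝ (fun Q => lam Q w) P v - fderiv ℝ (fun Q => lam Q v) P w =
        Complex.I * (mu v * (starRingEnd ℂ) (mu w) - mu w * (starRingEnd ℂ) (mu v)) +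
        (c P.2.1 * mu v + (starRingEnd ℂ) (c P.2.1) * (starRingEnd ℂ) (mu v)) * lam P w -
        (c P.2.1 * mu w + (starRingEnd ℂ) (c P.2.1) * (starRingEnd ℂ) (mu w)) * lam P v := by
  intro P v w
  set y := P.2.1
  set k : ℝ := deriv (deriv f) y / deriv f y
  have hc_eq : c y = I * k / 2 := by
    rw [hc, ofReal_div]
    ring
  have hlam_deriv (u z : ℝ × ℝ × ℝ) :
      fderiv ℝ (fun Q => lam Q u) P z = z.2.1 * (-k * lam P u - 2 * u.1) := by
    have hg := hasDerivAt_neg_two_div_deriv_mul (hf.differentiable two_ne_zero y)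
      ((hf.iterate_deriv' 1 1).differentiable one_ne_zero y) (hf' y) u.2.2 u.1
    simp only [hlam]
    rw [fderiv_comp_fst_snd_apply hg.differentiableAt, hg.deriv, real_smul]
  rw [hlam_deriv, hlam_deriv, hmu, hmu, hc_eq, I_mul_sub_mul_conj, I_mul_div_two_mul_add_conj,
    I_mul_div_two_mul_add_conj]
  ring
end
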